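/- The fundamental slide polynomial F_a equals the sum over b of x^b where b ranges over slides of a: that is, Σ_{b ∈ Slide(a)} x^b = Σ_{b ≥ a, flat(b) refines flat(a)} x^b. -/
import Mathlib


open MvPolynomial
open scoped Classical

noncomputable section

/-- Partial sum of the first `k` entries of a weak composition. -/
def psum {n : ℕ} (a : Fin n → ℕ) (k : ℕ) : ℕ :=
  ∑ i ∈ Finset.univ.filter (fun i : Fin n => (i : ℕ) < k), a i

/-- Dominance order: `Dom a b` means `b ≥ a`, i.e. every partial sum of `b`
is at least the corresponding partial sum of `a`. -/
def Dom {n : ℕ} (a b : Fin n → ℕ) : Prop := ∀ k : ℕ, psum a k ≤ psum b k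

/-- `flat a`: the list of nonzero entries of `a`, in order. -/
def flat {n : ℕ} (a : Fin n → ℕ) : List ℕ := (List.ofFn a).filter (· ≠ 0)

/-- The monomial `x^b`. -/
def mono {n : ℕ} (b : Fin n → ℕ) : MvPolynomial (Fin n) ℤ := ∏ i, X i ^ b i

/-- Finite set of weak compositions of length `n` with all entries `≤ N`. -/
def box (n N : ℕ) : Finset (Fin n → ℕ) := Fintype.piFinset fun _ => Finset.range (N + 1)

/-- A single slide move relative to the base composition `a`: a local move
`(…,0,k,…) → (…,i,j,…)` with `i + j = k`.  When `fixed = true` we additionally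
require `j > 0` whenever `k` occupies a position that is nonzero in `a`. -/
def SlideMove {n : ℕ} (a : Fin n → ℕ) (fixed : Bool) (b c : Fin n → ℕ) : Prop :=
  ∃ (p : ℕ) (hp : p + 1 < n) (i j : ℕ),
    b ⟨p, Nat.lt_of_succ_lt hp⟩ = 0 ∧
    i + j = b ⟨p + 1, hp⟩ ∧
    (fixed = true → a ⟨p + 1, hp⟩ ≠ 0 → 0 < j) ∧
    c = Function.update (Function.update b ⟨p, Nat.lt_of_succ_lt hp⟩ i) ⟨p + 1, hp⟩ j

/-- `b` is a slide of `a`. -/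
def Slides {n : ℕ} (a b : Fin n → ℕ) : Prop :=
  Relation.ReflTransGen (SlideMove a false) a b

/-- `b` is a fixed slide of `a`. -/
def FixSlides {n : ℕ} (a b : Fin n → ℕ) : Prop :=
  Relation.ReflTransGen (SlideMove a true) a b

/-- The monomial slide polynomial `M_a`. -/
def Mslide {n : ℕ} (a : Fin n → ℕ) : MvPolynomial (Fin n) ℤ :=
  ∑ b ∈ (box n (∑ i, a i)).filter (fun b => Dom a b ∧ flat b = flat a), mono b

/-- The fundamental slide polynomial `F_a`, as the generating function of slides. -/
def Fslide {n : ℕ} (a : Fin n → ℕ) : MvPolynomial (Fin n) ℤ :=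
  ∑ b ∈ (box n (∑ i, a i)).filter (fun b => Slides a b), mono b

/-- The fundamental particle polynomial `L_a`, the generating function of fixed slides. -/
def Lpart {n : ℕ} (a : Fin n → ℕ) : MvPolynomial (Fin n) ℤ :=
  ∑ b ∈ (box n (∑ i, a i)).filter (fun b => FixSlides a b), mono b

/-- A left swap: exchange entries `b i ≤ b j` with `i < j`. -/
def LSwap {n : ℕ} (b c : Fin n → ℕ) : Prop :=
  ∃ i j : Fin n, i < j ∧ b i ≤ b j ∧
    c = Function.update (Function.update b i (b j)) j (b i)


/-- `Refines α β`: the composition `α` refines `β`, i.e. `β` is obtained by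
summing consecutive (nonempty) blocks of `α`. -/
inductive Refines : List ℕ → List ℕ → Prop
  | nil : Refines [] []
  | cons (block rest tail : List ℕ) : block ≠ [] → Refines rest tail →
      Refines (block ++ rest) (block.sum :: tail)

/- ===== auxiliary lemmas ===== -/

section AuxSlide

variable {n : ℕ}

lemma psum_zero' (a : Fin n → ℕ) : psum a 0 = 0 := by
  simp [_root_.psum]

lemma psum_mono (a : Fin n → ℕ) {k k' : ℕ} (h : k ≤ k') : psum a k ≤ psum a k' := by
  apply Finset.sum_le_sum_of_subset
  intro i hi
  simp only [Finset.mem_filter, Finset.mem_univ, true_and] at hi ⊢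
  omega

lemma psum_univ (a : Fin n → ℕ) {k : ℕ} (h : n ≤ k) : psum a k = ∑ i, a i := by
  unfold _root_.psum
  rw [Finset.filter_true_of_mem]
  intro i _
  exact lt_of_lt_of_le i.isLt h

lemma psum_take (a : Fin n → ℕ) (k : ℕ) : psum a k = ((List.ofFn a).take k).sum := by
  induction k with
  | zero => simp [psum_zero']
  | succ k ih =>
    by_cases h : k < n
    · rw [List.take_succ]
      have h1 : (List.ofFn a)[k]? = some (a ⟨k, h⟩) := by
        rw [List.getElem?_eq_getElem (by simpa using h)]
        simp
      rw [h1]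
      have h2 : psum a (k+1) = psum a k + a ⟨k, h⟩ := by
        unfold _root_.psum
        have : Finset.univ.filter (fun i : Fin n => (i : ℕ) < k + 1)
            = insert (⟨k, h⟩ : Fin n) (Finset.univ.filter (fun i : Fin n => (i : ℕ) < k)) := by
          ext i
          simp only [Finset.mem_insert, Finset.mem_filter, Finset.mem_univ, true_and]
          constructor
          · intro hi
            rcases Nat.lt_succ_iff_lt_or_eq.mp hi with h' | h'
            · exact Or.inr h'
            · exact Or.inl (Fin.ext h')
          · rintro (rfl | hi)
            · simp
            · omega
        rw [this, Finset.sum_insert (by simp)]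
        ring
      rw [h2, ih]
      simp [add_comm]
    · have h1 : psum a (k+1) = psum a k := by
        unfold _root_.psum
        apply Finset.sum_congr _ (fun _ _ => rfl)
        apply Finset.filter_congr
        intro i _
        have := i.isLt
        constructor <;> intro <;> omega
      rw [h1, ih, List.take_succ, List.getElem?_eq_none (by simpa using not_lt.mp h)]
      simp

lemma psum_succ (a : Fin n → ℕ) (k : ℕ) (h : k < n) :
    psum a (k + 1) = psum a k + a ⟨k, h⟩ := by
  rw [psum_take, psum_take, List.take_succ,
    List.getElem?_eq_getElem (by simpa using h)]
  simp

lemma eq_of_psum_eq {a b : Fin n → ℕ} (h : ∀ k, psum a k = psum b k) : a = b := by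
  funext i
  have h1 := psum_succ a i i.isLt
  have h2 := psum_succ b i i.isLt
  simp only [Fin.eta] at h1 h2
  have := h i; have := h (i + 1)
  omega

/-- prefix sums of a list -/
def PSl (l : List ℕ) (s : ℕ) : Prop := ∃ t, t <+: l ∧ t.sum = s

lemma PSl.zero (l : List ℕ) : PSl l 0 := ⟨[], List.nil_prefix, rfl⟩

lemma refines_sum {α β : List ℕ} (h : Refines α β) : α.sum = β.sum := by
  induction h with
  | nil => rfl
  | cons block rest tail hb hr ih => simp [ih]

lemma refines_ps {α β : List ℕ} (h : Refines α β) : ∀ s, PSl β s → PSl α s := by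
  induction h with
  | nil => exact fun s hs => hs
  | cons block rest tail hb hr ih =>
    rintro s ⟨t, ht, rfl⟩
    match t with
    | [] => exact PSl.zero _
    | x :: t' =>
      obtain ⟨r, hr2⟩ := ht
      injection hr2 with hx hr3
      obtain ⟨u, hu, hus⟩ := ih t'.sum ⟨t', ⟨r, hr3⟩, rfl⟩
      refine ⟨block ++ u, (List.prefix_append_right_inj block).mpr hu, ?_⟩
      simp [hus, hx]

lemma prefix_sum_le {t t' : List ℕ} (h : t <+: t') : t.sum ≤ t'.sum := by
  obtain ⟨r, rfl⟩ := h
  simp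

lemma refines_of_ps : ∀ (β α : List ℕ), (∀ x ∈ α, x ≠ 0) → (∀ x ∈ β, x ≠ 0) →
    α.sum = β.sum → (∀ s, PSl β s → PSl α s) → Refines α β := by
  intro β
  induction β with
  | nil =>
    intro α hα _ hsum _
    have : α = [] := by
      rcases List.eq_nil_or_concat α with rfl | ⟨l, x, rfl⟩
      · rfl
      · exact absurd (List.sum_eq_zero_iff.mp hsum x (by simp)) (hα x (by simp))
    rw [this]; exact Refines.nil
  | cons y v ih =>
    intro α hα hβ hsum hps
    obtain ⟨t, ht, hts⟩ := hps y ⟨[y], ⟨v, rfl⟩, by simp⟩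
    have htne : t ≠ [] := by
      rintro rfl
      exact hβ y (by simp) hts.symm
    obtain ⟨r, rfl⟩ := ht
    have hy : y = t.sum := hts.symm
    subst hy
    refine Refines.cons t r v htne (ih r ?_ ?_ ?_ ?_)
    · intro x hx; exact hα x (by simp [hx])
    · intro x hx; exact hβ x (by simp [hx])
    · have : t.sum + r.sum = t.sum + v.sum := by simpa using hsum
      omega
    · intro s hs
      obtain ⟨t', ht', hts'⟩ := hps (t.sum + s) (by
        obtain ⟨w, hw, hws⟩ := hs
        exact ⟨t.sum :: w, by
          obtain ⟨z, hz⟩ := hw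
          exact ⟨z, by rw [← hz]; simp⟩, by simp [hws]⟩)
      rcases List.prefix_or_prefix_of_prefix ht' ⟨r, rfl⟩ with h1 | h1
      · have := prefix_sum_le h1
        have hs0 : s = 0 := by omega
        rw [hs0]; exact PSl.zero _
      · obtain ⟨u, rfl⟩ := h1
        refine ⟨u, (List.prefix_append_right_inj t).mp ht', ?_⟩
        have : t.sum + u.sum = t.sum + s := by simpa using hts'
        omega

lemma exists_prefix_filter {α : Type*} (p : α → Bool) :
    ∀ (l t : List α), t <+: l.filter p → ∃ u, u <+: l ∧ u.filter p = t := by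
  intro l
  induction l with
  | nil =>
    intro t ht
    simp only [List.filter_nil] at ht
    rw [List.prefix_nil.mp ht]
    exact ⟨[], List.nil_prefix, rfl⟩
  | cons x l ih =>
    intro t ht
    by_cases hp : p x
    · rw [List.filter_cons_of_pos hp] at ht
      match t with
      | [] => exact ⟨[], List.nil_prefix, rfl⟩
      | y :: t' =>
        obtain ⟨r, hr⟩ := ht
        injection hr with h1 h2
        obtain ⟨u, hu, hu2⟩ := ih t' ⟨r, h2⟩
        exact ⟨x :: u, List.cons_prefix_cons.mpr ⟨rfl, hu⟩,
          by rw [List.filter_cons_of_pos hp, hu2, h1]⟩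
    · rw [List.filter_cons_of_neg (by simpa using hp)] at ht
      obtain ⟨u, hu, hu2⟩ := ih t ht
      exact ⟨x :: u, List.cons_prefix_cons.mpr ⟨rfl, hu⟩,
        by rw [List.filter_cons_of_neg (by simpa using hp), hu2]⟩

lemma sum_filter_ne_zero : ∀ (l : List ℕ), (l.filter (· ≠ 0)).sum = l.sum := by
  intro l
  induction l with
  | nil => rfl
  | cons x l ih =>
    by_cases hx : x = 0
    · subst hx
      rw [List.filter_cons_of_neg (by simp)]
      simpa using ih
    · rw [List.filter_cons_of_pos (by simpa using hx)]
      simpa using ih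

lemma flat_pos (a : Fin n → ℕ) : ∀ x ∈ flat a, x ≠ 0 := by
  intro x hx
  simpa using List.of_mem_filter hx

lemma flat_sum (a : Fin n → ℕ) : (flat a).sum = ∑ i, a i := by
  rw [flat, sum_filter_ne_zero, List.sum_ofFn]

lemma ps_flat_iff (a : Fin n → ℕ) (s : ℕ) : PSl (flat a) s ↔ ∃ k, psum a k = s := by
  constructor
  · rintro ⟨t, ht, rfl⟩
    obtain ⟨u, hu, hu2⟩ := exists_prefix_filter _ _ _ ht
    refine ⟨u.length, ?_⟩
    rw [psum_take, ← List.prefix_iff_eq_take.mp hu, ← hu2, sum_filter_ne_zero]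
  · rintro ⟨k, rfl⟩
    refine ⟨((List.ofFn a).take k).filter (· ≠ 0), ?_, ?_⟩
    · exact List.IsPrefix.filter _ (List.take_prefix _ _)
    · rw [sum_filter_ne_zero, psum_take]

lemma psum_update2 (b : Fin n → ℕ) (p : ℕ) (hp : p + 1 < n) (i j : ℕ)
    (h0 : b ⟨p, Nat.lt_of_succ_lt hp⟩ = 0) (hij : i + j = b ⟨p + 1, hp⟩) (k : ℕ) :
    psum (Function.update (Function.update b ⟨p, Nat.lt_of_succ_lt hp⟩ i) ⟨p + 1, hp⟩ j) k
      = psum b k + if k = p + 1 then i else 0 := by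
  simp only [_root_.psum]
  set P : Fin n := ⟨p, Nat.lt_of_succ_lt hp⟩ with hP
  set Q : Fin n := ⟨p + 1, hp⟩ with hQ
  have hPQ : P ≠ Q := by simp [hP, hQ, Fin.ext_iff]
  set S := Finset.univ.filter (fun i : Fin n => (i : ℕ) < k) with hS
  have memS : ∀ x : Fin n, x ∈ S ↔ (x : ℕ) < k := by
    intro x; simp [hS]
  rcases lt_trichotomy k (p + 1) with hk | hk | hk
  · rw [if_neg (by omega)]
    rw [Nat.add_zero]
    refine Finset.sum_congr rfl ?_
    intro x hx
    have hxk := (memS x).mp hx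
    rw [Function.update_of_ne (by simp [hQ, Fin.ext_iff]; omega),
      Function.update_of_ne (by simp [hP, Fin.ext_iff]; omega)]
  · subst hk
    rw [if_pos rfl]
    have hPS : P ∈ S := (memS P).mpr (by simp [hP])
    have step1 : ∑ x ∈ S, Function.update (Function.update b P i) Q j x
        = ∑ x ∈ S, Function.update b P i x := by
      refine Finset.sum_congr rfl ?_
      intro x hx
      have hxk := (memS x).mp hx
      rw [Function.update_of_ne (by simp [hQ, Fin.ext_iff]; omega)]
    rw [step1, Finset.sum_update_of_mem hPS, Finset.sdiff_singleton_eq_erase,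
      Finset.sum_erase _ h0]
    ring
  · rw [if_neg (by omega)]
    have hQS : Q ∈ S := (memS Q).mpr (by simp [hQ]; omega)
    have hPS' : P ∈ S.erase Q := Finset.mem_erase.mpr ⟨hPQ, (memS P).mpr (by simp [hP]; omega)⟩
    rw [Finset.sum_update_of_mem hQS, Finset.sdiff_singleton_eq_erase]
    have step2 : ∑ x ∈ S.erase Q, Function.update b P i x
        = i + ∑ x ∈ (S.erase Q).erase P, b x := by
      rw [Finset.sum_update_of_mem hPS', Finset.sdiff_singleton_eq_erase]
    rw [step2]
    have h3 : ∑ x ∈ S, b x = b Q + (b P + ∑ x ∈ (S.erase Q).erase P, b x) := by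
      rw [← Finset.add_sum_erase _ _ hQS, ← Finset.add_sum_erase _ _ hPS']
    rw [h3, h0, ← hij]
    ring

lemma slideMove_false_eq (a a' : Fin n → ℕ) : SlideMove a false = SlideMove a' false := by
  funext b c
  apply propext
  constructor <;> rintro ⟨p, hp, i, j, h1, h2, _, h4⟩ <;>
    exact ⟨p, hp, i, j, h1, h2, by simp, h4⟩

lemma slides_to {a b : Fin n → ℕ} (h : Slides a b) :
    Dom a b ∧ psum b n = psum a n ∧ ∀ k, ∃ m, psum b m = psum a k := by
  unfold Slides at h
  induction h with
  | refl => exact ⟨fun k => le_refl _, rfl, fun k => ⟨k, rfl⟩⟩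
  | @tail c d h1 h2 ih =>
    obtain ⟨hdom, hsum, hps⟩ := ih
    obtain ⟨p, hp, i, j, hc0, hij, -, rfl⟩ := h2
    have hupd := psum_update2 c p hp i j hc0 hij
    refine ⟨?_, ?_, ?_⟩
    · intro k
      rw [hupd k]
      have := hdom k
      omega
    · rw [hupd n, if_neg (by omega), Nat.add_zero, hsum]
    · intro k
      obtain ⟨m, hm⟩ := hps k
      by_cases hm' : m = p + 1
      · subst hm'
        refine ⟨p, ?_⟩
        rw [hupd p, if_neg (by omega), Nat.add_zero]
        rw [psum_succ c p (Nat.lt_of_succ_lt hp), hc0, Nat.add_zero] at hm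
        exact hm
      · exact ⟨m, by rw [hupd m, if_neg hm', Nat.add_zero, hm]⟩

lemma slides_of (b : Fin n → ℕ) : ∀ (N : ℕ) (a : Fin n → ℕ),
    (∑ k ∈ Finset.range (n + 1), (psum b k - psum a k)) ≤ N →
    Dom a b → psum b n = psum a n → (∀ k, ∃ m, psum b m = psum a k) →
    Relation.ReflTransGen (SlideMove b false) a b := by
  intro N
  induction N with
  | zero =>
    intro a hD hdom hsum hps
    have hab : a = b := by
      apply eq_of_psum_eq
      intro k
      rcases le_or_gt k n with hk | hk
      · have hmem : k ∈ Finset.range (n + 1) := Finset.mem_range.mpr (by omega)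
        have := Finset.sum_eq_zero_iff.mp (Nat.le_zero.mp hD) k hmem
        have := hdom k
        omega
      · rw [psum_univ a (le_of_lt hk), psum_univ b (le_of_lt hk),
          ← psum_univ a (le_refl n), ← psum_univ b (le_refl n)]
        have hmem : n ∈ Finset.range (n + 1) := Finset.mem_range.mpr (by omega)
        have := Finset.sum_eq_zero_iff.mp (Nat.le_zero.mp hD) n hmem
        have := hdom n
        omega
    rw [hab]
  | succ N ihN =>
    intro a hD hdom hsum hps
    by_cases hab : a = b
    · rw [hab]
    · -- find the first place where b exceeds a
      have hne : ∃ k, psum a k < psum b k := by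
        by_contra hcon
        push_neg at hcon
        exact hab (eq_of_psum_eq (fun k => le_antisymm (hdom k) (hcon k)))
      obtain ⟨m, hm, hminlt⟩ : ∃ m, psum a m < psum b m ∧ ∀ k, k < m → ¬ psum a k < psum b k :=
        ⟨Nat.find hne, Nat.find_spec hne, fun k hk => Nat.find_min hne hk⟩
      have hmin : ∀ k, k < m → psum a k = psum b k := by
        intro k hk
        exact le_antisymm (hdom k) (not_lt.mp (hminlt k hk))
      have hm1 : 1 ≤ m := by
        rcases Nat.eq_zero_or_pos m with h0 | h0
        · rw [h0, psum_zero', psum_zero'] at hm; omega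
        · exact h0
      have hmn : m < n := by
        by_contra hcon
        push_neg at hcon
        rw [psum_univ a hcon, psum_univ b hcon, ← psum_univ a (le_refl n),
          ← psum_univ b (le_refl n), hsum] at hm
        omega
      -- find the first place q ≥ m where a has a nonzero entry
      have hq_ex : ∃ k, m ≤ k ∧ psum a m < psum a (k + 1) := by
        refine ⟨n - 1, by omega, ?_⟩
        have h1 : n - 1 + 1 = n := by omega
        rw [h1, ← hsum]
        exact lt_of_lt_of_le hm (psum_mono b (le_of_lt hmn))
      obtain ⟨q, ⟨hqm, hq⟩, hqmin⟩ : ∃ q, (m ≤ q ∧ psum a m < psum a (q + 1)) ∧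
          ∀ k, k < q → ¬(m ≤ k ∧ psum a m < psum a (k + 1)) :=
        ⟨Nat.find hq_ex, Nat.find_spec hq_ex, fun k hk => Nat.find_min hq_ex hk⟩
      have hflat : ∀ k, m ≤ k → k ≤ q → psum a k = psum a m := by
        intro k hk1 hk2
        rcases Nat.eq_or_lt_of_le hk1 with rfl | hlt
        · rfl
        · have hk3 : k - 1 < q := by omega
          have := hqmin (k-1) hk3
          push_neg at this
          have h5 := this (by omega)
          have h6 : k - 1 + 1 = k := by omega
          rw [h6] at h5
          exact le_antisymm h5 (psum_mono a hk1)
      have hqn : q < n := by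
        by_contra hcon
        push_neg at hcon
        have h1 : psum a (q + 1) = psum a q := by
          rw [psum_univ a (by omega), psum_univ a (by omega)]
        rw [h1, hflat q hqm (le_refl q)] at hq
        omega
      have hq1 : 1 ≤ q := le_trans hm1 hqm
      obtain ⟨p, rfl⟩ : ∃ p, q = p + 1 := ⟨q - 1, by omega⟩
      have hp : p + 1 < n := hqn
      have haq : 0 < a ⟨p + 1, hp⟩ := by
        rw [psum_succ a (p + 1) hp] at hq
        have := hflat (p + 1) hqm (le_refl _)
        omega
      have hap : a ⟨p, Nat.lt_of_succ_lt hp⟩ = 0 := by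
        rcases Nat.eq_or_lt_of_le hqm with heq | hlt
        · -- q = m, use the PS condition
          by_contra hcon
          have hpm : p = m - 1 := by omega
          have hpsa : psum a m = psum a p + a ⟨p, Nat.lt_of_succ_lt hp⟩ := by
            have := psum_succ a p (Nat.lt_of_succ_lt hp)
            rw [show p + 1 = m by omega] at this
            exact this
          have hpb : psum a p = psum b p := hmin p (by omega)
          obtain ⟨m', hm'⟩ := hps m
          rcases le_or_gt m' p with h1 | h1
          · have := psum_mono b h1
            omega
          · have : m ≤ m' := by omega
            have := psum_mono b this
            omega
        · -- q > m : entry between m and q is zero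
          have h1 := hflat p (by omega) (by omega)
          have h2 := hflat (p + 1) hqm (le_refl _)
          have := psum_succ a p (Nat.lt_of_succ_lt hp)
          omega
      -- the amounts
      have he : psum a (p + 1) < psum b (p + 1) := by
        have h2 := hflat (p + 1) hqm (le_refl _)
        calc psum a (p + 1) = psum a m := h2
          _ < psum b m := hm
          _ ≤ psum b (p + 1) := psum_mono b hqm
      set e := psum b (p + 1) - psum a (p + 1) with hedef
      set i := min (a ⟨p + 1, hp⟩) e with hidef
      set j := a ⟨p + 1, hp⟩ - i with hjdef
      have hij : i + j = a ⟨p + 1, hp⟩ := by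
        have : i ≤ a ⟨p + 1, hp⟩ := min_le_left _ _
        omega
      have hi0 : 0 < i := by
        have : 0 < e := by omega
        simp only [hidef, lt_min_iff]
        exact ⟨haq, this⟩
      set a' := Function.update (Function.update a ⟨p, Nat.lt_of_succ_lt hp⟩ i) ⟨p + 1, hp⟩ j
        with ha'def
      have hupd := psum_update2 a p hp i j hap hij
      have hmove : SlideMove b false a a' := ⟨p, hp, i, j, hap, hij, by simp, rfl⟩
      have hdom' : Dom a' b := by
        intro k
        rw [show psum a' k = psum a k + if k = p + 1 then i else 0 from hupd k]
        by_cases hk : k = p + 1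
        · subst hk
          rw [if_pos rfl]
          have : i ≤ e := min_le_right _ _
          omega
        · rw [if_neg hk, Nat.add_zero]
          exact hdom k
      have hsum' : psum b n = psum a' n := by
        rw [hupd n, if_neg (by omega), Nat.add_zero, hsum]
      have hps' : ∀ k, ∃ m', psum b m' = psum a' k := by
        intro k
        by_cases hk : k = p + 1
        · subst hk
          rw [hupd (p + 1), if_pos rfl]
          rcases Nat.le_total (a ⟨p + 1, hp⟩) e with hle | hle
          · -- i = a_q : psum a' (p+1) = psum a (p+2)
            have hieq : i = a ⟨p + 1, hp⟩ := min_eq_left hle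
            obtain ⟨m', hm'⟩ := hps (p + 2)
            refine ⟨m', ?_⟩
            rw [hm', show p + 2 = (p + 1) + 1 from rfl, psum_succ a (p + 1) hp, hieq]
          · have hieq : i = e := min_eq_right hle
            exact ⟨p + 1, by omega⟩
        · rw [hupd k, if_neg hk, Nat.add_zero]
          exact hps k
      have hmeas : (∑ k ∈ Finset.range (n + 1), (psum b k - psum a' k)) ≤ N := by
        have hlt : (∑ k ∈ Finset.range (n + 1), (psum b k - psum a' k))
            < ∑ k ∈ Finset.range (n + 1), (psum b k - psum a k) := by
          apply Finset.sum_lt_sum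
          · intro k hk
            rw [hupd k]
            split <;> omega
          · refine ⟨p + 1, Finset.mem_range.mpr (by omega), ?_⟩
            rw [hupd (p + 1), if_pos rfl]
            omega
        omega
      exact Relation.ReflTransGen.head hmove (ihN a' hmeas hdom' hsum' hps')

lemma slides_iff_dom_refines (a b : Fin n → ℕ) :
    Slides a b ↔ Dom a b ∧ Refines (flat b) (flat a) := by
  constructor
  · intro h
    obtain ⟨hdom, hsum, hps⟩ := slides_to h
    refine ⟨hdom, refines_of_ps (flat a) (flat b) (flat_pos b) (flat_pos a) ?_ ?_⟩
    · rw [flat_sum, flat_sum, ← psum_univ a (le_refl n), ← psum_univ b (le_refl n), hsum]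
    · intro s hs
      obtain ⟨k, hk⟩ := (ps_flat_iff a s).mp hs
      obtain ⟨m, hm⟩ := hps k
      exact (ps_flat_iff b s).mpr ⟨m, by rw [hm, hk]⟩
  · rintro ⟨hdom, href⟩
    have hsum : psum b n = psum a n := by
      rw [psum_univ a (le_refl n), psum_univ b (le_refl n), ← flat_sum, ← flat_sum,
        refines_sum href]
    have hps : ∀ k, ∃ m, psum b m = psum a k := by
      intro k
      exact (ps_flat_iff b _).mp (refines_ps href _ ((ps_flat_iff a _).mpr ⟨k, rfl⟩))
    unfold Slides
    rw [slideMove_false_eq a b]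
    exact slides_of b _ a (le_refl _) hdom hsum hps

end AuxSlide

/-- the fundamental slide polynomial `F_a` (the generating function
of slides of `a`) equals `Σ_{b ≥ a, flat(b) refines flat(a)} x^b`. -/
theorem Fslide_eq_sum_refining {n : ℕ} (a : Fin n → ℕ) :
    Fslide a =
      ∑ b ∈ (box n (∑ i, a i)).filter (fun b => Dom a b ∧ Refines (flat b) (flat a)),
        mono b := by
  unfold Fslide
  apply Finset.sum_congr _ (fun _ _ => rfl)
  apply Finset.filter_congr
  intro x _
  exact slides_iff_dom_refines a x

end
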